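/- For Hankel determinants built from a sequence c : ℕ → ℝ, the identity G^1_n H^0_n − G^0_n H^1_n − H^0_{n+1} H^1_{n-1} = 0 holds for all n ≥ 1, where G^m_n is the Hankel-type determinant obtained from H^m_{n} by replacing the last row (c_{m+n-1},…,c_{m+2n-2}) with (c_{m+n}, …, c_{m+2n-1}). -/

import Mathlib

/-- Hankel determinant `H^m_n = det(c_{i+j+m})`. -/
noncomputable def Hk (c : ℕ → ℝ) (m n : ℕ) : ℝ :=
  (Matrix.of fun i j : Fin n => c (i.val + j.val + m)).det

/-- `G^m_n`: the Hankel determinant `H^m_n` with its last row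
`(c_{m+n-1},…,c_{m+2n-2})` replaced by `(c_{m+n},…,c_{m+2n-1})`;
by convention `G^m_0 = 0`. -/
noncomputable def Gk (c : ℕ → ℝ) (m n : ℕ) : ℝ :=
  if n = 0 then 0 else
  (Matrix.of fun i j : Fin n =>
    if i.val = n - 1 then c (m + n + j.val) else c (i.val + j.val + m)).det

/-- `E^m_n`: determinant of the `n×n` matrix with rows
`(c_{m+k},…,c_{m+k+n-2}, c_{m+k+n+1})`, i.e. the last column advanced by 2. -/
noncomputable def Ek (c : ℕ → ℝ) (m n : ℕ) : ℝ :=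
  (Matrix.of fun i j : Fin n =>
    if j.val = n - 1 then c (m + i.val + n + 1) else c (m + i.val + j.val)).det

/-- `F^m_n`: determinant of the `n×n` matrix with rows
`(c_{m+k},…,c_{m+k+n-3}, c_{m+k+n-1}, c_{m+k+n})`, i.e. column `n−2` skipped;
by convention `F^m_1 = 0`. -/
noncomputable def Fk (c : ℕ → ℝ) (m n : ℕ) : ℝ :=
  if n = 1 then 0 else
  (Matrix.of fun i j : Fin n =>
    if n - 2 ≤ j.val then c (m + i.val + j.val + 1) else c (m + i.val + j.val)).det

/-- `S^m_n`: determinant of `(c_{m+σ(i)+σ(j)})` where `σ(i) = i` for `i ≤ n−2`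
and `σ(n−1) = n`. -/
noncomputable def Sk (c : ℕ → ℝ) (m n : ℕ) : ℝ :=
  (Matrix.of fun i j : Fin n =>
    c (m + (if i.val = n - 1 then n else i.val) +
        (if j.val = n - 1 then n else j.val))).det

/-!
This is the Desnanot–Jacobi identity for the Hankel matrix `(c_{i+j})_{0 ≤ i,j ≤ n}`, removing
its last two rows and its first and last columns. That identity is Sylvester's identity for a
matrix `N` obtained by bordering a block `D` with two rows and two columns: if `D` is invertible
and `S` is its Schur complement in `N`, then `det N = det D * det S`, and each of the four
once-bordered minors is `det D` times an entry of `S`. The invertibility of `D` is removed by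
specialising the generic matrix over `ℤ[x_ij]`, where `det D ≠ 0`.
-/

open Matrix

namespace Fin

variable {m : ℕ}

theorem succAbove_eq_finSumFinEquiv_map (i : Fin 2) :
    (![last (m + 1), (last m).castSucc] i).succAbove =
      fun k => finSumFinEquiv (Sum.map id (fun _ : Fin 1 => i) (finSumFinEquiv.symm k)) := by
  ext k
  induction k using lastCases with
  | last => fin_cases i <;> simp
  | cast k => fin_cases i <;> simp [succAbove_of_castSucc_lt]

theorem cycleRange_comp_castAdd :
    (cycleRange (last m).castSucc : Fin (m + 2) → Fin (m + 2)) ∘ castAdd 2 = castSucc ∘ succ := by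
  ext k
  simp only [Function.comp_apply, val_castSucc, val_succ]
  rw [coe_cycleRange_of_lt (by simp [lt_def])]
  rfl

theorem cycleRange_comp_succAbove :
    (cycleRange (last m).castSucc : Fin (m + 2) → Fin (m + 2)) ∘ (last m).castSucc.succAbove =
      succ := by
  ext k
  induction k using lastCases with
  | last => simp [cycleRange_of_gt]
  | cast k => simp [succAbove_of_castSucc_lt, coe_cycleRange_of_lt]

theorem cycleRange_comp_castSucc :
    (cycleRange (last m).castSucc : Fin (m + 2) → Fin (m + 2)) ∘ castSucc =
      castSucc ∘ cycleRange (last m) := by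
  ext k
  induction k using lastCases with
  | last => simp
  | cast k => simp [coe_cycleRange_of_lt]

end Fin

namespace Matrix

section Sylvester

variable {ι R : Type*} [Fintype ι] [DecidableEq ι] [CommRing R]

def bordered (N : Matrix (ι ⊕ Fin 2) (ι ⊕ Fin 2) R) (i j : Fin 2) :
    Matrix (ι ⊕ Fin 1) (ι ⊕ Fin 1) R :=
  N.submatrix (Sum.map id fun _ => i) (Sum.map id fun _ => j)

omit [Fintype ι] [DecidableEq ι] [CommRing R] in
theorem bordered_map {S : Type*} (N : Matrix (ι ⊕ Fin 2) (ι ⊕ Fin 2) R) (f : R → S)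
    (i j : Fin 2) : (N.map f).bordered i j = (N.bordered i j).map f :=
  rfl

theorem toBlocks₁₁_map {α β l m n o : Type*} (M : Matrix (l ⊕ m) (n ⊕ o) α) (f : α → β) :
    (M.map f).toBlocks₁₁ = M.toBlocks₁₁.map f :=
  rfl

theorem det_bordered_of_invertible (N : Matrix (ι ⊕ Fin 2) (ι ⊕ Fin 2) R)
    [Invertible N.toBlocks₁₁] (i j : Fin 2) :
    (N.bordered i j).det =
      N.toBlocks₁₁.det * (N.toBlocks₂₂ - N.toBlocks₂₁ * ⅟N.toBlocks₁₁ * N.toBlocks₁₂) i j := by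
  have hblocks : N.bordered i j =
      fromBlocks N.toBlocks₁₁ (N.toBlocks₁₂.submatrix id fun _ => j)
        (N.toBlocks₂₁.submatrix (fun _ => i) id) (N.toBlocks₂₂.submatrix (fun _ => i) fun _ => j) := by
    ext (_ | _) (_ | _) <;> rfl
  rw [hblocks, det_fromBlocks₁₁, det_unique (n := Fin 1)]
  simp [mul_apply]

theorem det_mul_det_toBlocks₁₁_of_invertible (N : Matrix (ι ⊕ Fin 2) (ι ⊕ Fin 2) R)
    [Invertible N.toBlocks₁₁] :
    N.det * N.toBlocks₁₁.det =
      (N.bordered 0 0).det * (N.bordered 1 1).det - (N.bordered 0 1).det * (N.bordered 1 0).det := by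
  have hschur : N.det = N.toBlocks₁₁.det *
      (N.toBlocks₂₂ - N.toBlocks₂₁ * ⅟N.toBlocks₁₁ * N.toBlocks₁₂).det := by
    rw [← det_fromBlocks₁₁, fromBlocks_toBlocks]
  simp only [hschur, det_bordered_of_invertible, det_fin_two]
  ring

theorem det_mul_det_toBlocks₁₁ (N : Matrix (ι ⊕ Fin 2) (ι ⊕ Fin 2) R) :
    N.det * N.toBlocks₁₁.det =
      (N.bordered 0 0).det * (N.bordered 1 1).det - (N.bordered 0 1).det * (N.bordered 1 0).det := by
  let P := MvPolynomial ((ι ⊕ Fin 2) × (ι ⊕ Fin 2)) ℤ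
  let X := mvPolynomialX (ι ⊕ Fin 2) (ι ⊕ Fin 2) ℤ
  have hD : X.toBlocks₁₁.det ≠ 0 := by
    have h1 : MvPolynomial.eval (fun p => (1 : Matrix (ι ⊕ Fin 2) (ι ⊕ Fin 2) ℤ) p.1 p.2)
        X.toBlocks₁₁.det = 1 := by
      rw [RingHom.map_det, RingHom.mapMatrix_apply, ← toBlocks₁₁_map, ← RingHom.mapMatrix_apply,
        mvPolynomialX_mapMatrix_eval, ← diagonal_one, toBlocks₁₁_diagonal, diagonal_one, det_one]
    intro h
    rw [h, map_zero] at h1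
    exact zero_ne_one h1
  have hX : X.det * X.toBlocks₁₁.det =
      (X.bordered 0 0).det * (X.bordered 1 1).det - (X.bordered 0 1).det * (X.bordered 1 0).det := by
    apply IsFractionRing.injective P (FractionRing P)
    have : Invertible (X.map (algebraMap P (FractionRing P))).toBlocks₁₁ := by
      apply invertibleOfIsUnitDet
      rw [toBlocks₁₁_map, ← RingHom.mapMatrix_apply, ← RingHom.map_det]
      exact ((map_ne_zero_iff _ (IsFractionRing.injective P _)).2 hD).isUnit
    simp only [map_sub, map_mul, RingHom.map_det, RingHom.mapMatrix_apply, ← bordered_map,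
      ← toBlocks₁₁_map]
    exact det_mul_det_toBlocks₁₁_of_invertible _
  simpa only [map_sub, map_mul, RingHom.map_det, RingHom.mapMatrix_apply, ← bordered_map,
      ← toBlocks₁₁_map, MvPolynomial.coe_eval₂Hom, X, mvPolynomialX_map_eval₂] using
    congrArg (MvPolynomial.eval₂Hom (Int.castRingHom R) fun p => N p.1 p.2) hX

end Sylvester

variable {R : Type*} [CommRing R] {m : ℕ}

theorem det_mul_det_submatrix_castAdd (M : Matrix (Fin (m + 2)) (Fin (m + 2)) R) :
    M.det * (M.submatrix (Fin.castAdd 2) (Fin.castAdd 2)).det =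
      (M.submatrix Fin.castSucc Fin.castSucc).det *
          (M.submatrix (Fin.last m).castSucc.succAbove (Fin.last m).castSucc.succAbove).det -
        (M.submatrix Fin.castSucc (Fin.last m).castSucc.succAbove).det *
          (M.submatrix (Fin.last m).castSucc.succAbove Fin.castSucc).det := by
  have hbordered : ∀ i j, ((M.submatrix finSumFinEquiv finSumFinEquiv).bordered i j).det =
      (M.submatrix (![Fin.last (m + 1), (Fin.last m).castSucc] i).succAbove
        (![Fin.last (m + 1), (Fin.last m).castSucc] j).succAbove).det := by
    intro i j
    rw [Fin.succAbove_eq_finSumFinEquiv_map, Fin.succAbove_eq_finSumFinEquiv_map,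
      ← det_submatrix_equiv_self finSumFinEquiv.symm, bordered, submatrix_submatrix,
      submatrix_submatrix]
    rfl
  have hD : (M.submatrix finSumFinEquiv finSumFinEquiv).toBlocks₁₁ =
      M.submatrix (Fin.castAdd 2) (Fin.castAdd 2) :=
    rfl
  simpa [hbordered, hD] using det_mul_det_toBlocks₁₁ (M.submatrix finSumFinEquiv finSumFinEquiv)

theorem det_submatrix_comp_cycleRange {α β : Type*} {n : ℕ} (M : Matrix α β R)
    (r : Fin n → α) (c : Fin n → β) (i : Fin n) :
    (M.submatrix r (c ∘ Fin.cycleRange i)).det = (-1) ^ (i : ℕ) * (M.submatrix r c).det := by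
  change ((M.submatrix r c).submatrix id (Fin.cycleRange i)).det = _
  rw [det_permute', Fin.sign_cycleRange]
  push_cast
  rfl

-- Moving column `0` to position `m` makes the removed columns `0` and `m + 1` the last two.
theorem det_mul_det_submatrix_castAdd_succ (M : Matrix (Fin (m + 2)) (Fin (m + 2)) R) :
    M.det * (M.submatrix (Fin.castAdd 2) (Fin.castSucc ∘ Fin.succ)).det =
      (M.submatrix (Fin.last m).castSucc.succAbove Fin.succ).det *
          (M.submatrix Fin.castSucc Fin.castSucc).det -
        (M.submatrix (Fin.last m).castSucc.succAbove Fin.castSucc).det *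
          (M.submatrix Fin.castSucc Fin.succ).det := by
  have h := det_mul_det_submatrix_castAdd (M.submatrix id (Fin.cycleRange (Fin.last m).castSucc))
  simp only [submatrix_submatrix, Function.id_comp, Fin.cycleRange_comp_castAdd,
    Fin.cycleRange_comp_succAbove, Fin.cycleRange_comp_castSucc,
    det_submatrix_comp_cycleRange] at h
  rw [← Function.id_comp (Fin.cycleRange _), det_submatrix_comp_cycleRange] at h
  simp only [Fin.val_castSucc, Fin.val_last, submatrix_id_id] at h
  rcases neg_one_pow_eq_or R m with hs | hs <;> rw [hs] at h
  · linear_combination h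
  · linear_combination -h

end Matrix

def hankel {R : Type*} (c : ℕ → R) (n : ℕ) : Matrix (Fin n) (Fin n) R :=
  of fun i j => c (i + j)

section HankelMinors

variable (c : ℕ → ℝ) (m : ℕ)

theorem Hk_zero_eq_det_hankel : Hk c 0 m = (hankel c m).det :=
  rfl

theorem hankel_submatrix_castSucc :
    (hankel c (m + 1)).submatrix Fin.castSucc Fin.castSucc = hankel c m :=
  rfl

theorem Hk_one_eq_det_submatrix :
    Hk c 1 m = ((hankel c (m + 2)).submatrix (Fin.castAdd 2) (Fin.castSucc ∘ Fin.succ)).det :=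
  rfl

theorem Hk_one_succ_eq_det_submatrix :
    Hk c 1 (m + 1) = ((hankel c (m + 2)).submatrix Fin.castSucc Fin.succ).det :=
  rfl

theorem Gk_one_succ_eq_det_submatrix :
    Gk c 1 (m + 1) =
      ((hankel c (m + 2)).submatrix (Fin.last m).castSucc.succAbove Fin.succ).det := by
  rw [Gk, if_neg m.succ_ne_zero]
  congr 1
  ext i j
  induction i using Fin.lastCases with
  | last => simp [hankel, add_comm, add_left_comm]
  | cast i => simp [hankel, Fin.succAbove_of_castSucc_lt, i.isLt.ne, add_assoc]

theorem Gk_zero_succ_eq_det_submatrix :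
    Gk c 0 (m + 1) =
      ((hankel c (m + 2)).submatrix (Fin.last m).castSucc.succAbove Fin.castSucc).det := by
  rw [Gk, if_neg m.succ_ne_zero]
  congr 1
  ext i j
  induction i using Fin.lastCases with
  | last => simp [hankel, add_comm, add_left_comm]
  | cast i => simp [hankel, Fin.succAbove_of_castSucc_lt, i.isLt.ne]

end HankelMinors

/-- `G¹_n H⁰_n − G⁰_n H¹_n − H⁰_{n+1} H¹_{n-1} = 0` for `n ≥ 1`. -/
theorem G1_identity (c : ℕ → ℝ) (n : ℕ) (hn : 1 ≤ n) :
    Gk c 1 n * Hk c 0 n - Gk c 0 n * Hk c 1 n - Hk c 0 (n + 1) * Hk c 1 (n - 1) = 0 := by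
  obtain ⟨m, rfl⟩ : ∃ m, n = m + 1 := ⟨n - 1, by omega⟩
  have h := det_mul_det_submatrix_castAdd_succ (hankel c (m + 2))
  rw [← Hk_one_eq_det_submatrix, ← Gk_one_succ_eq_det_submatrix, ← Gk_zero_succ_eq_det_submatrix,
    ← Hk_one_succ_eq_det_submatrix] at h
  rw [hankel_submatrix_castSucc, ← Hk_zero_eq_det_hankel, ← Hk_zero_eq_det_hankel] at h
  rw [Nat.add_sub_cancel]
  linear_combination -h
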